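/- arXiv:1105.1054 — 2 statements merged into one kernel-verified Lean document; each statement's English description precedes it below -/
import Mathlib

section
/- Let G be a finite solvable group and let H be a maximal subgroup of G that is not normal in G. Let q be a prime dividing the order of the Fitting subgroup F(H/Core_G H) of the quotient H/Core_G H. Then G has a Sylow q-subgroup Q such that the normalizer N_G(Q) is contained in H. -/
/-- The Fitting subgroup of a group `X`: the subgroup generated by (for finite groups,
the largest of) all nilpotent normal subgroups of `X`. -/
def fittingSubgroup (X : Type*) [Group X] : Subgroup X :=
  sSup {N : Subgroup X | N.Normal ∧ Group.IsNilpotent N}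

/-!
Passing to `G / Core_G H` we may assume `H` core-free, and `q ∣ |F(H)|` yields a nontrivial normal
`q`-subgroup `R` of `H`. A minimal normal subgroup `V` of the solvable group `G` is abelian, so it
complements `H`, and `C_V(R)` is normal in `G = VH`; minimality and core-freeness force
`C_V(R) = 1`. Counting fixed points of `R` on `V` gives `q ∤ |V| = |G : H|`, so a Sylow
`q`-subgroup `Q` of `H` containing `R` is Sylow in `G`. If `vh` normalizes `Q` with `v ∈ V`,
`h ∈ H`, then `[v, Q] ≤ V ∩ H = 1`, so `v ∈ C_V(R) = 1` and `N_G(Q) ≤ H`.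
-/

namespace Subgroup

variable {G : Type*} [Group G]

theorem card_sup_dvd_of_normal_left (A B : Subgroup G) [A.Normal] :
    Nat.card ↥(A ⊔ B) ∣ Nat.card A * Nat.card B := by
  rw [← relIndex_bot_left (A ⊔ B), ← relIndex_mul_relIndex ⊥ A _ bot_le le_sup_left,
    relIndex_bot_left, relIndex_sup_left]
  exact mul_dvd_mul_left _ (relIndex_dvd_card A B)

theorem exists_mem_prime_dvd_card_of_dvd_card_sSup {p : ℕ} (hp : p.Prime)
    {S : Set (Subgroup G)} (hS : S.Finite) (hnormal : ∀ N ∈ S, N.Normal)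
    (hdvd : p ∣ Nat.card ↥(sSup S)) : ∃ N ∈ S, p ∣ Nat.card N := by
  induction S, hS using Set.Finite.induction_on with
  | empty => simp [hp.ne_one] at hdvd
  | @insert A S _ _ ih =>
    have := hnormal A (Set.mem_insert A S)
    rw [sSup_insert] at hdvd
    rcases (hp.dvd_mul).mp (hdvd.trans (card_sup_dvd_of_normal_left A (sSup S))) with hA | hS
    · exact ⟨A, Set.mem_insert A S, hA⟩
    · obtain ⟨N, hN, hpN⟩ := ih (fun N hN => hnormal N (Set.mem_insert_of_mem A hN)) hS
      exact ⟨N, Set.mem_insert_of_mem A hN, hpN⟩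

end Subgroup

theorem exists_normal_isPGroup_ne_bot_of_dvd_card_fittingSubgroup {X : Type*} [Group X]
    [Finite X] {p : ℕ} [Fact p.Prime] (hdvd : p ∣ Nat.card (fittingSubgroup X)) :
    ∃ R : Subgroup X, R.Normal ∧ IsPGroup p R ∧ R ≠ ⊥ := by
  obtain ⟨N, ⟨hN, hNnil⟩, hpN⟩ :=
    Subgroup.exists_mem_prime_dvd_card_of_dvd_card_sSup Fact.out (Set.toFinite _)
      (fun N hN => hN.1) hdvd
  obtain ⟨P⟩ : Nonempty (Sylow p N) := Sylow.nonempty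
  have := P.characteristic_of_normal inferInstance
  refine ⟨(P : Subgroup N).map N.subtype, inferInstance, P.2.map _, ?_⟩
  rw [Ne, Subgroup.map_eq_bot_iff_of_injective _ N.subtype_injective]
  exact P.ne_bot_of_dvd_card hpN

namespace Subgroup

variable {G G' : Type*} [Group G] [Group G']

theorem eq_bot_of_le_of_normalCore_eq_bot {H W : Subgroup G} (hcore : H.normalCore = ⊥)
    [W.Normal] (hWH : W ≤ H) : W = ⊥ :=
  le_bot_iff.mp (hcore ▸ normal_le_normalCore.mpr hWH)

theorem normal_of_le_centralizer_of_le_normalizer {V H W : Subgroup G} (hVH : V ⊔ H = ⊤)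
    (hV : V ≤ centralizer W) (hH : H ≤ normalizer W) : W.Normal :=
  normalizer_eq_top_iff.mp <| top_le_iff.mp <|
    hVH ▸ sup_le (hV.trans (centralizer_le_normalizer _)) hH

theorem normalizer_le_normalizer_centralizer (R : Subgroup G) :
    normalizer (R : Set G) ≤ normalizer (centralizer (R : Set G) : Set G) := by
  refine le_normalizer_iff.mpr fun g hg c hc => mem_centralizer_iff.mpr fun r hr => ?_
  have hc' := mem_centralizer_iff.mp hc _ ((mem_normalizer_iff''.mp hg r).mp hr)
  calc r * (g * c * g⁻¹) = g * ((g⁻¹ * r * g) * c) * g⁻¹ := by group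
    _ = g * (c * (g⁻¹ * r * g)) * g⁻¹ := by rw [hc']
    _ = g * c * g⁻¹ * r := by group

theorem le_centralizer_of_minimal_normal [Group.IsSolvable G] {V : Subgroup G}
    (hV : Minimal (fun N : Subgroup G => N.Normal ∧ N ≠ ⊥) V) : V ≤ centralizer V := by
  have := hV.prop.1
  rw [← commutator_eq_bot_iff_le_centralizer]
  by_contra h
  exact (Group.IsSolvable.commutator_lt_of_ne_bot hV.prop.2).ne
    (hV.eq_of_le ⟨inferInstance, h⟩ (commutator_le_self V))

theorem inf_eq_bot_of_normalCore_eq_bot {V H : Subgroup G} [V.Normal] (hVab : V ≤ centralizer V)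
    (hVH : V ⊔ H = ⊤) (hcore : H.normalCore = ⊥) : V ⊓ H = ⊥ :=
  have : (V ⊓ H).Normal := normal_of_le_centralizer_of_le_normalizer hVH
    (hVab.trans (centralizer_le inf_le_left))
    (inf_normalizer_le_normalizer_inf.trans' (le_inf le_normalizer_of_normal le_normalizer))
  eq_bot_of_le_of_normalCore_eq_bot hcore inf_le_right

theorem normalizer_le_of_inf_centralizer_eq_bot {V H Q : Subgroup G} [V.Normal]
    (hVH : V ⊔ H = ⊤) (hinf : V ⊓ H = ⊥) (hQH : Q ≤ H) (hC : V ⊓ centralizer Q = ⊥) :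
    normalizer Q ≤ H := by
  intro n hn
  obtain ⟨v, hv, h, hh, rfl⟩ := mem_sup_of_normal_left.mp (hVH ▸ mem_top n)
  suffices v ∈ centralizer Q by
    rw [(mem_bot.mp (hC ▸ mem_inf.mpr ⟨hv, this⟩) : v = 1), one_mul]
    exact hh
  refine mem_centralizer_iff.mpr fun x hx => ?_
  have hxH : v⁻¹ * x * v * x⁻¹ ∈ H := by
    have : v⁻¹ * x * v = h * ((v * h)⁻¹ * x * (v * h)) * h⁻¹ := by group
    rw [this]
    exact mul_mem (mul_mem (mul_mem hh (hQH ((mem_normalizer_iff''.mp hn x).mp hx))) (inv_mem hh))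
      (inv_mem (hQH hx))
  have hxV : v⁻¹ * x * v * x⁻¹ ∈ V := by
    rw [mul_assoc, mul_assoc]
    exact mul_mem (inv_mem hv) (by simpa [mul_assoc] using Normal.conj_mem ‹_› v hv x)
  have := mem_bot.mp (hinf ▸ mem_inf.mpr ⟨hxV, hxH⟩)
  rw [mul_inv_eq_one, mul_assoc, inv_mul_eq_iff_eq_mul] at this
  exact this

theorem not_dvd_card_of_inf_centralizer_eq_bot {p : ℕ} [Fact p.Prime] {N P : Subgroup G}
    [Finite N] (hPN : P ≤ normalizer N) (hP : IsPGroup p P) (hC : N ⊓ centralizer P = ⊥) :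
    ¬ p ∣ Nat.card N := by
  intro hdvd
  let _ : MulAction P N := MulAction.compHom N (inclusion hPN)
  obtain ⟨b, hb, hb1⟩ := hP.exists_fixed_point_of_prime_dvd_card_of_fixed_point N hdvd
    (a := 1) fun r => smul_one (inclusion hPN r)
  refine hb1 (Subtype.ext (mem_bot.mp (hC ▸ mem_inf.mpr ⟨b.2, ?_⟩))).symm
  refine mem_centralizer_iff.mpr fun r hr => ?_
  have : r * b * r⁻¹ = b := congrArg Subtype.val (hb ⟨r, hr⟩)
  exact mul_inv_eq_iff_eq_mul.mp this

theorem inf_centralizer_eq_bot_of_minimal_normal {V H R : Subgroup G}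
    (hV : Minimal (fun N : Subgroup G => N.Normal ∧ N ≠ ⊥) V) (hVab : V ≤ centralizer V)
    (hVH : V ⊔ H = ⊤) (hcore : H.normalCore = ⊥) (hRH : R ≤ H) (hHR : H ≤ normalizer R)
    (hR : R ≠ ⊥) : V ⊓ centralizer R = ⊥ := by
  have := hV.prop.1
  have : (V ⊓ centralizer R).Normal := normal_of_le_centralizer_of_le_normalizer hVH
    (hVab.trans (centralizer_le inf_le_left))
    (inf_normalizer_le_normalizer_inf.trans' (le_inf le_normalizer_of_normal
      (hHR.trans (normalizer_le_normalizer_centralizer R))))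
  by_contra hne
  have hRV : R ≤ centralizer V := le_centralizer_iff.mp
    ((hV.eq_of_le ⟨inferInstance, hne⟩ inf_le_left).symm.trans_le inf_le_right)
  have : (centralizer V ⊓ H).Normal := normal_of_le_centralizer_of_le_normalizer hVH
    (le_centralizer_iff.mp inf_le_left)
    (inf_normalizer_le_normalizer_inf.trans' (le_inf le_normalizer_of_normal le_normalizer))
  have hbot : centralizer V ⊓ H = ⊥ := eq_bot_of_le_of_normalCore_eq_bot hcore inf_le_right
  exact hR (le_bot_iff.mp (hbot ▸ le_inf hRV hRH))

theorem exists_sylow_le_of_not_dvd_index [Finite G] {p : ℕ} [Fact p.Prime] {R H : Subgroup G}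
    (hRp : IsPGroup p R) (hRH : R ≤ H) (hH : ¬ p ∣ H.index) :
    ∃ Q : Sylow p G, R ≤ Q ∧ (Q : Subgroup G) ≤ H := by
  obtain ⟨P, hP⟩ := (hRp.comap_subtype (K := H)).exists_le_sylow
  have hindex : ¬ p ∣ ((P : Subgroup H).map H.subtype).index := by
    rw [index_map_subtype]
    exact Nat.Prime.not_dvd_mul Fact.out P.not_dvd_index hH
  refine ⟨(P.2.map H.subtype).toSylow hindex, ?_, map_subtype_le _⟩
  rw [IsPGroup.toSylow_coe, ← inf_of_le_left hRH, ← subgroupOf_map_subtype]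
  exact map_mono hP

theorem exists_sylow_normalizer_le_of_normalCore_eq_bot [Finite G] [Group.IsSolvable G]
    {p : ℕ} [Fact p.Prime] {H R : Subgroup G} (hmax : IsCoatom H) (hcore : H.normalCore = ⊥)
    (hRH : R ≤ H) (hHR : H ≤ normalizer R) (hRp : IsPGroup p R) (hR : R ≠ ⊥) :
    ∃ Q : Sylow p G, normalizer (Q : Set G) ≤ H := by
  have htop : (⊤ : Subgroup G) ≠ ⊥ := fun h => hmax.1 (eq_top_iff.mpr (h ▸ bot_le))
  obtain ⟨V, hV⟩ := exists_minimal_of_wellFoundedLT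
    (fun N : Subgroup G => N.Normal ∧ N ≠ ⊥) ⟨⊤, inferInstance, htop⟩
  have := hV.prop.1
  have hVab := le_centralizer_of_minimal_normal hV
  have hVH : V ⊔ H = ⊤ := sup_comm H V ▸ codisjoint_iff.mp (hmax.not_le_iff_codisjoint.mp
    fun hle => hV.prop.2 (eq_bot_of_le_of_normalCore_eq_bot hcore hle))
  have hinf := inf_eq_bot_of_normalCore_eq_bot hVab hVH hcore
  have hC := inf_centralizer_eq_bot_of_minimal_normal hV hVab hVH hcore hRH hHR hR
  have hindex : H.index = Nat.card V :=
    (isComplement'_of_disjoint_and_mul_eq_univ (disjoint_iff.mpr hinf)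
      (by rw [← normal_mul, hVH, coe_top])).index_eq_card
  obtain ⟨Q, hRQ, hQH⟩ := exists_sylow_le_of_not_dvd_index hRp hRH
    (hindex ▸ not_dvd_card_of_inf_centralizer_eq_bot le_normalizer_of_normal hRp hC)
  exact ⟨Q, normalizer_le_of_inf_centralizer_eq_bot hVH hinf hQH
    (le_bot_iff.mp (hC ▸ inf_le_inf_left V (centralizer_le hRQ)))⟩

theorem isCoatom_map_of_ker_le {f : G →* G'} (hf : Function.Surjective f) {H : Subgroup G}
    (hker : f.ker ≤ H) (hH : IsCoatom H) : IsCoatom (H.map f) := by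
  rw [← sup_of_le_left hker, ← comap_map_eq] at hH
  refine ⟨fun htop => hH.1 (by rw [htop, comap_top]), fun M hM => ?_⟩
  rw [← (comap_injective hf).eq_iff, comap_top]
  exact hH.2 _ ((comap_lt_comap_of_surjective hf).mpr hM)

theorem normalCore_map_mk'_normalCore (H : Subgroup G) :
    (H.map (QuotientGroup.mk' H.normalCore)).normalCore = ⊥ := by
  set π := QuotientGroup.mk' H.normalCore
  have hle : (H.map π).normalCore.comap π ≤ H.normalCore := by
    refine normal_le_normalCore.mpr ((comap_mono (normalCore_le _)).trans ?_)
    rw [comap_map_eq, QuotientGroup.ker_mk', sup_of_le_left (normalCore_le H)]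
  rw [eq_bot_iff, ← map_comap_eq_self_of_surjective (QuotientGroup.mk'_surjective _)
    (H.map π).normalCore, ← QuotientGroup.map_mk'_self H.normalCore]
  exact map_mono hle

theorem range_le_normalizer_map (φ : G →* G') (R : Subgroup G) [R.Normal] :
    φ.range ≤ normalizer (R.map φ : Set G') := by
  rw [MonoidHom.range_eq_map, ← normalizer_eq_top (H := R)]
  exact le_normalizer_map φ

theorem _root_.Sylow.exists_normalizer_le_of_map [Finite G] {p : ℕ} [Fact p.Prime] {f : G →* G'}
    (hf : Function.Surjective f) {H : Subgroup G} (hker : f.ker ≤ H) (Q' : Sylow p G')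
    (hQ' : normalizer (Q' : Set G') ≤ H.map f) :
    ∃ Q : Sylow p G, normalizer (Q : Set G) ≤ H := by
  obtain ⟨Q, rfl⟩ := Sylow.mapSurjective_surjective hf p Q'
  refine ⟨Q, ?_⟩
  calc normalizer (Q : Set G) ≤ (normalizer ((Q : Subgroup G).map f : Set G')).comap f :=
        map_le_iff_le_comap.mp (le_normalizer_map f)
    _ ≤ (H.map f).comap f := comap_mono hQ'
    _ = H := by rw [comap_map_eq, sup_of_le_left hker]

end Subgroup

theorem QuotientGroup.exists_injective_range_eq_map_mk' {G : Type*} [Group G]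
    (H K : Subgroup G) [K.Normal] :
    ∃ φ : H ⧸ K.subgroupOf H →* G ⧸ K,
      Function.Injective φ ∧ φ.range = H.map (mk' K) := by
  let φ := map (K.subgroupOf H) K H.subtype (Subgroup.comap_subtype K H).ge
  refine ⟨φ, ?_, ?_⟩
  · rw [← MonoidHom.ker_eq_bot_iff, ker_map]
    exact map_mk'_self _
  · calc φ.range = (φ.comp (mk' _)).range := by
          rw [MonoidHom.range_comp, range_mk', ← MonoidHom.range_eq_map]
      _ = ((mk' K).comp H.subtype).range := rfl
      _ = H.map (mk' K) := by rw [MonoidHom.range_comp, H.range_subtype]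

theorem normalizer_sylow_le_of_maximal_not_normal_general
    {G : Type*} [Group G] [Finite G] [Group.IsSolvable G]
    (H : Subgroup G) (hmax : IsCoatom H)
    (q : ℕ) (hq : q.Prime)
    (hdvd : q ∣ Nat.card (fittingSubgroup (H ⧸ H.normalCore.subgroupOf H))) :
    ∃ Q : Sylow q G, Subgroup.normalizer ((Q : Subgroup G) : Set G) ≤ H := by
  have := Fact.mk hq
  set π := QuotientGroup.mk' H.normalCore
  have hπ : Function.Surjective π := QuotientGroup.mk'_surjective _
  have hker : π.ker ≤ H := (QuotientGroup.ker_mk' _).le.trans H.normalCore_le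
  obtain ⟨R, hRn, hRp, hR⟩ := exists_normal_isPGroup_ne_bot_of_dvd_card_fittingSubgroup hdvd
  obtain ⟨φ, hφ, hrange⟩ := QuotientGroup.exists_injective_range_eq_map_mk' H H.normalCore
  obtain ⟨Q, hQ⟩ := Subgroup.exists_sylow_normalizer_le_of_normalCore_eq_bot
    (Subgroup.isCoatom_map_of_ker_le hπ hker hmax) (Subgroup.normalCore_map_mk'_normalCore H)
    (hrange ▸ R.map_le_range φ) (hrange ▸ Subgroup.range_le_normalizer_map φ R)
    (hRp.map φ) (by rwa [Ne, Subgroup.map_eq_bot_iff_of_injective _ hφ])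
  exact Sylow.exists_normalizer_le_of_map hπ hker Q hQ

/-- **Theorem 1.** Let `H` be a non-normal maximal subgroup of a finite solvable group `G`
and let `q` be a prime dividing the order of `F(H / Core_G H)`. Then `G` has a Sylow
`q`-subgroup `Q` with `N_G(Q) ≤ H`. -/
theorem normalizer_sylow_le_of_maximal_not_normal
    {G : Type*} [Group G] [Finite G] [Group.IsSolvable G]
    (H : Subgroup G) (hmax : IsCoatom H) (hnn : ¬ H.Normal)
    (q : ℕ) (hq : q.Prime)
    (hdvd : q ∣ Nat.card (fittingSubgroup (H ⧸ H.normalCore.subgroupOf H))) :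
    ∃ Q : Sylow q G, Subgroup.normalizer ((Q : Subgroup G) : Set G) ≤ H :=
  normalizer_sylow_le_of_maximal_not_normal_general H hmax q hq hdvd
end

section
/- Let π be a set of primes, let G be a finite π-separable group, and let H be a subgroup of G such that the index |G:H| is a π-number (all its prime divisors lie in π). Then O_π(H) is contained in O_π(G). -/
/-- `n` is a `π`-number: every prime divisor of `n` lies in `π`. -/
def IsPiNumber (π : Set ℕ) (n : ℕ) : Prop := ∀ p : ℕ, p.Prime → p ∣ n → p ∈ π

/-- A group `G` is `π`-separable if it has a normal series whose factors are `π`-groups or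
`π'`-groups.  The order of the factor `s (i+1) / s i` is the relative index
`(s i.castSucc).relindex (s i.succ)`. -/
def IsPiSeparable (π : Set ℕ) (G : Type*) [Group G] : Prop :=
  ∃ (n : ℕ) (s : Fin (n + 1) → Subgroup G),
    Monotone s ∧ s 0 = ⊥ ∧ s (Fin.last n) = ⊤ ∧ (∀ i, (s i).Normal) ∧
    ∀ i : Fin n,
      IsPiNumber π ((s i.castSucc).relIndex (s i.succ)) ∨
      IsPiNumber πᶜ ((s i.castSucc).relIndex (s i.succ))

/-- `O_π(X)`: the largest normal `π`-subgroup of a finite group `X`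
(defined as the join of all normal `π`-subgroups). -/
def piRadical (π : Set ℕ) (X : Type*) [Group X] : Subgroup X :=
  sSup {N : Subgroup X | N.Normal ∧ IsPiNumber π (Nat.card N)}

/-! As `H` normalizes `O_π(H)`, it suffices to show that a `π`-subgroup `P` whose normalizer has
`π`-index lies in `O_π(G)`. This goes by induction on `|G|`. Let `N` be the first nontrivial
term of a `π`-separable series; by induction `PN/N ≤ O_π(G/N)`. If `N` is a `π`-group, the
preimage of `O_π(G/N)` is a normal `π`-subgroup. If `N` is a `π'`-group, then `N` normalizes `P`
(the index of `N_G(P) ∩ N` in `N` is both a `π`- and a `π'`-number), so `P` centralizes `N`.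
In `L = (preimage of O_π(G/N)) ∩ C_G(N)` the `π'`-group `N ∩ L` is central with `π`-index, so by
Schur–Zassenhaus it has a complement, a normal `π`-subgroup of `L` containing `P`; thus
`P ≤ O_π(L) ≤ O_π(G)`. -/

open Subgroup

namespace IsPiNumber

variable {π : Set ℕ} {m n : ℕ}

theorem one : IsPiNumber π 1 := fun _ hp hd => absurd hd hp.not_dvd_one

theorem of_dvd (h : IsPiNumber π n) (hmn : m ∣ n) : IsPiNumber π m :=
  fun p hp hpm => h p hp (hpm.trans hmn)

theorem mul (hm : IsPiNumber π m) (hn : IsPiNumber π n) : IsPiNumber π (m * n) := fun p hp hd =>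
  ((Nat.Prime.dvd_mul hp).mp hd).elim (hm p hp) (hn p hp)

theorem coprime (hm : IsPiNumber π m) (hn : IsPiNumber πᶜ n) : m.Coprime n :=
  Nat.coprime_of_dvd fun p hp hpm hpn => hn p hp hpn (hm p hp hpm)

theorem eq_one (hπ : IsPiNumber π n) (hπ' : IsPiNumber πᶜ n) : n = 1 := by
  simpa using hπ.coprime hπ'

end IsPiNumber

section PiRadical

variable {π : Set ℕ} {G : Type*} [Group G]

theorem isPiNumber_card_comap_mk' {N : Subgroup G} [N.Normal] {K : Subgroup (G ⧸ N)}
    (hN : IsPiNumber π (Nat.card N)) (hK : IsPiNumber π (Nat.card K)) :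
    IsPiNumber π (Nat.card (K.comap (QuotientGroup.mk' N))) := by
  have hcard : Nat.card (K.comap (QuotientGroup.mk' N)) = Nat.card N * Nat.card K :=
    QuotientGroup.card_preimage_mk N K
  exact hcard ▸ hN.mul hK

theorem le_piRadical {K : Subgroup G} (hK : K.Normal) (hπ : IsPiNumber π (Nat.card K)) :
    K ≤ piRadical π G :=
  le_sSup ⟨hK, hπ⟩

theorem supClosed_normal_isPiNumber :
    SupClosed {N : Subgroup G | N.Normal ∧ IsPiNumber π (Nat.card N)} := by
  rintro A ⟨hA, hAπ⟩ B ⟨hB, hBπ⟩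
  refine ⟨sup_normal A B, ?_⟩
  have hsup : A ⊔ B = (A.map (QuotientGroup.mk' B)).comap (QuotientGroup.mk' B) := by
    rw [comap_map_eq, QuotientGroup.ker_mk']
  rw [hsup]
  exact isPiNumber_card_comap_mk' hBπ (hAπ.of_dvd (card_map_dvd A _))

variable [Finite G]

theorem normal_isPiNumber_piRadical :
    (piRadical π G).Normal ∧ IsPiNumber π (Nat.card (piRadical π G)) :=
  supClosed_normal_isPiNumber.sSup_mem (Set.toFinite _)
    ⟨inferInstance, by simpa using IsPiNumber.one⟩ subset_rfl

instance piRadical_normal : (piRadical π G).Normal := normal_isPiNumber_piRadical.1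

theorem isPiNumber_card_piRadical : IsPiNumber π (Nat.card (piRadical π G)) :=
  normal_isPiNumber_piRadical.2

instance piRadical_characteristic : (piRadical π G).Characteristic :=
  characteristic_iff_map_le.mpr fun φ => le_piRadical
    (piRadical_normal.map _ φ.surjective) (isPiNumber_card_piRadical.of_dvd (card_map_dvd _ _))

theorem map_subtype_piRadical_le {L : Subgroup G} [L.Normal] :
    (piRadical π L).map L.subtype ≤ piRadical π G :=
  le_piRadical inferInstance (isPiNumber_card_piRadical.of_dvd (card_map_dvd _ _))

end PiRadical

section Separable

variable {π : Set ℕ} {G G' : Type*} [Group G] [Group G']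

theorem Subgroup.relIndex_map_dvd (f : G →* G') (A B : Subgroup G) :
    (A.map f).relIndex (B.map f) ∣ A.relIndex B := by
  have hle : A.subgroupOf B ≤ ((A.map f).subgroupOf (B.map f)).comap (f.subgroupMap B) :=
    fun x hx => ⟨x, hx, rfl⟩
  rw [relIndex, ← index_comap_of_surjective _ (f.subgroupMap_surjective B)]
  exact index_dvd_of_le hle

theorem IsPiSeparable.quotient (hG : IsPiSeparable π G) (N : Subgroup G) [N.Normal] :
    IsPiSeparable π (G ⧸ N) := by
  obtain ⟨n, s, hmono, h0, hlast, hnormal, hfactor⟩ := hG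
  have hmk := QuotientGroup.mk'_surjective N
  refine ⟨n, fun i => (s i).map (QuotientGroup.mk' N), fun i j hij => map_mono (hmono hij),
    by simp only [h0, Subgroup.map_bot], by simp only [hlast, map_top_of_surjective _ hmk],
    fun i => (hnormal i).map _ hmk, fun i => ?_⟩
  have hdvd := relIndex_map_dvd (QuotientGroup.mk' N) (s i.castSucc) (s i.succ)
  exact (hfactor i).imp (·.of_dvd hdvd) (·.of_dvd hdvd)

theorem IsPiSeparable.exists_normal_ne_bot [Nontrivial G] (hG : IsPiSeparable π G) :
    ∃ N : Subgroup G, N.Normal ∧ N ≠ ⊥ ∧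
      (IsPiNumber π (Nat.card N) ∨ IsPiNumber πᶜ (Nat.card N)) := by
  obtain ⟨n, s, -, h0, hlast, hnormal, hfactor⟩ := hG
  obtain ⟨i, hi, hi'⟩ : ∃ i : Fin n, s i.castSucc = ⊥ ∧ s i.succ ≠ ⊥ := by
    by_contra! hno
    have hbot : ∀ j, s j = ⊥ := Fin.induction h0 hno
    exact top_ne_bot (hlast ▸ hbot (Fin.last n))
  refine ⟨s i.succ, hnormal _, hi', ?_⟩
  simpa only [hi, relIndex_bot_left] using hfactor i

end Separable

section Coprime

variable {π : Set ℕ} {G : Type*} [Group G]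

theorem Subgroup.relIndex_dvd_index_of_normal_right [Finite G] (H : Subgroup G) {N : Subgroup G}
    [N.Normal] : H.relIndex N ∣ H.index := by
  -- `|N : H ⊓ N| = |H ⊔ N : H|`, obtained by cancelling `|H ⊔ N : N| = |H : H ⊓ N|`
  have hcancel : (H ⊓ N).relIndex N * N.relIndex (H ⊔ N) =
      H.relIndex (H ⊔ N) * N.relIndex (H ⊔ N) := by
    rw [relIndex_mul_relIndex _ _ _ inf_le_right le_sup_right,
      ← relIndex_mul_relIndex _ _ _ inf_le_left le_sup_left, relIndex_sup_right,
      inf_relIndex_left, mul_comm]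
  rw [← inf_relIndex_right, Nat.eq_of_mul_eq_mul_right
    (Nat.pos_of_ne_zero (N.subgroupOf (H ⊔ N)).index_ne_zero_of_finite) hcancel]
  exact relIndex_dvd_index_of_le le_sup_left

theorem le_of_isPiNumber_index_of_isPiNumber_compl_card [Finite G] {H N : Subgroup G} [N.Normal]
    (hH : IsPiNumber π H.index) (hN : IsPiNumber πᶜ (Nat.card N)) : N ≤ H :=
  relIndex_eq_one.mp <| IsPiNumber.eq_one (hH.of_dvd (relIndex_dvd_index_of_normal_right H))
    (hN.of_dvd (relIndex_dvd_card _ _))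

theorem le_of_isPiNumber_card_of_isPiNumber_compl_index {P K : Subgroup G} [K.Normal]
    (hP : IsPiNumber π (Nat.card P)) (hK : IsPiNumber πᶜ K.index) : P ≤ K := by
  have hcard : Nat.card (P.map (QuotientGroup.mk' K)) = 1 :=
    IsPiNumber.eq_one (hP.of_dvd (card_map_dvd _ _))
      (hK.of_dvd (K.index_eq_card ▸ card_subgroup_dvd_card _))
  rwa [card_eq_one, Subgroup.map_eq_bot_iff, QuotientGroup.ker_mk'] at hcard

end Coprime

section Centralizer

variable {π : Set ℕ} {G : Type*} [Group G]

theorem le_centralizer_of_le_normalizer_of_inf_eq_bot {P N : Subgroup G} [N.Normal]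
    (hNP : N ≤ normalizer (P : Set G)) (hPN : P ⊓ N = ⊥) : P ≤ centralizer N := by
  refine commutator_eq_bot_iff_le_centralizer.mp (le_bot_iff.mp (hPN ▸ commutator_le.mpr ?_))
  intro p hp n hn
  rw [commutatorElement_def]
  refine mem_inf.mpr ⟨?_, mul_mem (Normal.conj_mem ‹_› n hn p) (inv_mem hn)⟩
  have hconj : n * p⁻¹ * n⁻¹ ∈ P := (mem_normalizer_iff.mp (hNP hn) p⁻¹).mp (inv_mem hp)
  simpa only [mul_assoc] using mul_mem hp hconj

theorem Subgroup.IsComplement'.normal_of_le_center {Z K : Subgroup G} (h : IsComplement' Z K)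
    (hZ : Z ≤ center G) : K.Normal := by
  rw [← normalizer_eq_top_iff, eq_top_iff, ← h.sup_eq_top]
  exact sup_le (hZ.trans (center_le_normalizer _)) le_normalizer

theorem le_piRadical_of_le_center [Finite G] {Z P : Subgroup G} (hZc : Z ≤ center G)
    (hZ : IsPiNumber πᶜ (Nat.card Z)) (hZi : IsPiNumber π Z.index)
    (hP : IsPiNumber π (Nat.card P)) : P ≤ piRadical π G := by
  have : Z.Normal := ⟨fun z hz g => by rwa [mem_center_iff.mp (hZc hz) g, mul_inv_cancel_right]⟩
  obtain ⟨K, hK⟩ := exists_right_complement'_of_coprime (hZi.coprime hZ).symm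
  have hKn : K.Normal := hK.normal_of_le_center hZc
  calc P ≤ K := le_of_isPiNumber_card_of_isPiNumber_compl_index hP (hK.index_eq_card ▸ hZ)
    _ ≤ piRadical π G := le_piRadical hKn (hK.symm.index_eq_card ▸ hZi)

theorem le_piRadical_of_le_comap_of_isPiNumber_compl [Finite G] {N P : Subgroup G} [N.Normal]
    (hN : IsPiNumber πᶜ (Nat.card N)) (hP : IsPiNumber π (Nat.card P))
    (hPN : P ≤ centralizer N) (hPR : P ≤ (piRadical π (G ⧸ N)).comap (QuotientGroup.mk' N)) :
    P ≤ piRadical π G := by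
  set L := (piRadical π (G ⧸ N)).comap (QuotientGroup.mk' N) ⊓ centralizer N
  have hZc : N.subgroupOf L ≤ center L := fun z hz =>
    mem_center_iff.mpr fun l => Subtype.ext (mem_centralizer_iff.mp l.2.2 z hz).symm
  have hker : ((QuotientGroup.mk' N).comp L.subtype).ker = N.subgroupOf L := by
    rw [← MonoidHom.comap_ker, QuotientGroup.ker_mk']
    rfl
  have hrange : ((QuotientGroup.mk' N).comp L.subtype).range ≤ piRadical π (G ⧸ N) := by
    rw [MonoidHom.range_comp, range_subtype]
    exact map_le_iff_le_comap.mpr inf_le_left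
  have hZi : IsPiNumber π (N.subgroupOf L).index := by
    rw [← hker, index_ker]
    exact isPiNumber_card_piRadical.of_dvd (card_dvd_of_le hrange)
  have hZ : IsPiNumber πᶜ (Nat.card (N.subgroupOf L)) :=
    hN.of_dvd (card_comap_dvd_of_injective _ _ L.subtype_injective)
  have hPL : P ≤ L := le_inf hPR hPN
  calc P = (P.subgroupOf L).map L.subtype := by rw [subgroupOf_map_subtype, inf_eq_left.mpr hPL]
    _ ≤ (piRadical π L).map L.subtype := map_mono <| le_piRadical_of_le_center hZc hZ hZi
        (hP.of_dvd (card_comap_dvd_of_injective _ _ L.subtype_injective))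
    _ ≤ piRadical π G := map_subtype_piRadical_le

end Centralizer

theorem Subgroup.card_quotient_lt {G : Type*} [Group G] [Finite G] {N : Subgroup G}
    (hN : N ≠ ⊥) : Nat.card (G ⧸ N) < Nat.card G := by
  rw [card_eq_card_quotient_mul_card_subgroup N]
  exact lt_mul_right Nat.card_pos ((one_lt_card_iff_ne_bot N).mpr hN)

theorem le_piRadical_of_isPiNumber_index_normalizer {π : Set ℕ} {G : Type*} [Group G] [Finite G]
    (hG : IsPiSeparable π G) {P : Subgroup G} (hP : IsPiNumber π (Nat.card P))
    (hidx : IsPiNumber π (normalizer (P : Set G)).index) : P ≤ piRadical π G := by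
  induction h : Nat.card G using Nat.strong_induction_on generalizing G with
  | _ n ih =>
  rcases subsingleton_or_nontrivial G with _ | _
  · exact P.eq_bot_of_subsingleton ▸ bot_le
  obtain ⟨N, hN, hNbot, hNcard⟩ := hG.exists_normal_ne_bot
  have hmk := QuotientGroup.mk'_surjective N
  have hPR : P ≤ (piRadical π (G ⧸ N)).comap (QuotientGroup.mk' N) := map_le_iff_le_comap.mp <|
    ih _ (h ▸ card_quotient_lt hNbot) (hG.quotient N) (hP.of_dvd (card_map_dvd _ _))
      (hidx.of_dvd ((index_dvd_of_le (le_normalizer_map _)).trans (index_map_dvd _ hmk))) rfl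
  rcases hNcard with hNπ | hNπ'
  · exact hPR.trans (le_piRadical (Normal.comap inferInstance _)
      (isPiNumber_card_comap_mk' hNπ isPiNumber_card_piRadical))
  · have hNP : N ≤ normalizer (P : Set G) :=
      le_of_isPiNumber_index_of_isPiNumber_compl_card hidx hNπ'
    have hPN : P ⊓ N = ⊥ := card_eq_one.mp <| IsPiNumber.eq_one
      (hP.of_dvd (card_dvd_of_le inf_le_left)) (hNπ'.of_dvd (card_dvd_of_le inf_le_right))
    exact le_piRadical_of_le_comap_of_isPiNumber_compl hNπ' hP
      (le_centralizer_of_le_normalizer_of_inf_eq_bot hNP hPN) hPR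

/-- **Lemma 1.** Let `G` be a finite `π`-separable group and `H` a subgroup of `G` whose index
`|G : H|` is a `π`-number.  Then `O_π(H) ≤ O_π(G)` (where `O_π(H)` is regarded as a subgroup
of `G` via the inclusion `H ↪ G`). -/
theorem piRadical_le_of_index_piNumber
    {G : Type*} [Group G] [Finite G] (π : Set ℕ)
    (hG : IsPiSeparable π G)
    (H : Subgroup G) (hidx : IsPiNumber π H.index) :
    (piRadical π H).map H.subtype ≤ piRadical π G := by
  have hH : H ≤ normalizer ((piRadical π H).map H.subtype : Set G) := by
    simpa only [normalizer_eq_top, ← MonoidHom.range_eq_map, range_subtype]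
      using le_normalizer_map (H := piRadical π H) H.subtype
  exact le_piRadical_of_isPiNumber_index_normalizer hG
    (isPiNumber_card_piRadical.of_dvd (card_map_dvd _ _)) (hidx.of_dvd (index_dvd_of_le hH))
end
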